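/- arXiv:2605.22716 — 2 statements merged into one kernel-verified Lean document; each statement's English description precedes it below -/
import Mathlib

section
/- Claim 1 from the paper: In any stable model T of the program Π consisting of q(0,0) and rules q(m−1,k) → q(m,k+1) for all integers m and all 0 ≤ k < n, every atom q(i,i) with 0 ≤ i ≤ n belongs to T. -/
inductive PForm (α : Type) : Type where
  | bot : PForm α
  | atom : α → PForm α
  | and : PForm α → PForm α → PForm α
  | or : PForm α → PForm α → PForm α
  | imp : PForm α → PForm α → PForm α

/-- Classical satisfaction of a formula by a set of true atoms. -/
def Cl {α : Type} (T : Set α) : PForm α → Prop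
  | .bot => False
  | .atom a => a ∈ T
  | .and F G => Cl T F ∧ Cl T G
  | .or F G => Cl T F ∨ Cl T G
  | .imp F G => Cl T F → Cl T G

/-- Here-and-there satisfaction by the HT-interpretation ⟨H,T⟩. -/
def HT {α : Type} (H T : Set α) : PForm α → Prop
  | .bot => False
  | .atom a => a ∈ H
  | .and F G => HT H T F ∧ HT H T G
  | .or F G => HT H T F ∨ HT H T G
  | .imp F G => (HT H T F → HT H T G) ∧ (Cl T F → Cl T G)

def PForm.neg {α : Type} (F : PForm α) : PForm α := .imp F .bot

/-- T is a stable (equilibrium) model of the theory Γ. -/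
def Stable {α : Type} (Γ : Set (PForm α)) (T : Set α) : Prop :=
  (∀ F ∈ Γ, Cl T F) ∧ ∀ H : Set α, H ⊂ T → ¬ (∀ F ∈ Γ, HT H T F)

/-- The property program for parameter n: the fact q(0,0) together with, for
    each 0 ≤ k < n, the rules q(m-1,k) → q(m,k+1) for every integer m. -/
def PropProg (n : ℕ) : Set (PForm (ℤ × ℤ)) :=
  {F | F = .atom (0, 0) ∨
       ∃ m k : ℤ, 0 ≤ k ∧ k < (n : ℤ) ∧
         F = .imp (.atom (m - 1, k)) (.atom (m, k + 1))}

namespace PropProg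

variable {n : ℕ} {T : Set (ℤ × ℤ)}

theorem origin_mem (hT : ∀ F ∈ PropProg n, Cl T F) : ((0 : ℤ), (0 : ℤ)) ∈ T :=
  hT _ (Or.inl rfl)

theorem mem_of_pred_mem (hT : ∀ F ∈ PropProg n, Cl T F) {m k : ℤ} (hk₀ : 0 ≤ k)
    (hkn : k < n) (h : (m - 1, k) ∈ T) : (m, k + 1) ∈ T :=
  hT _ (Or.inr ⟨m, k, hk₀, hkn, rfl⟩) h

theorem diag_mem (hT : ∀ F ∈ PropProg n, Cl T F) {i : ℤ} (hi₀ : 0 ≤ i) (hin : i ≤ n) :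
    (i, i) ∈ T := by
  induction i, hi₀ using Int.leInduction with
  | base => exact origin_mem hT
  | succ j hj ih =>
    have hj_mem : (j + 1 - 1, j) ∈ T := by simpa using ih (by omega)
    exact mem_of_pred_mem hT hj (by omega) hj_mem

end PropProg

theorem claim1 (n : ℕ) (T : Set (ℤ × ℤ)) (hT : Stable (PropProg n) T) :
    ∀ i : ℤ, 0 ≤ i → i ≤ (n : ℤ) → (i, i) ∈ T :=
  fun _ hi₀ hin => PropProg.diag_mem hT.1 hi₀ hin
end

section
/- Claim 2/3 from the paper: In the unique stable model T of the program Π consisting of q(0,0) and rules q(m−1,k) → q(m,k+1) for all integers m and 0 ≤ k < n, an atom q(i,j) belongs to T only if i = j and 0 ≤ i ≤ n. In particular q(i,j) ∉ T whenever i ≠ j, and q(i,i) ∉ T whenever i > n or i < 0. -/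
theorem claims2and3 (n : ℕ) (T : Set (ℤ × ℤ)) (hT : Stable (PropProg n) T) :
    ∀ i j : ℤ, (i, j) ∈ T → i = j ∧ 0 ≤ i ∧ i ≤ (n : ℤ) := by
  intro i j hij
  set H : Set (ℤ × ℤ) := T ∩ {p | p.1 = p.2 ∧ 0 ≤ p.1 ∧ p.1 ≤ (n : ℤ)} with hH
  have hsub : H ⊆ T := Set.inter_subset_left
  obtain ⟨hcl, hmin⟩ := hT
  have hht : ∀ F ∈ PropProg n, HT H T F := by
    intro F hF
    rcases hF with hfact | ⟨m, k, hk0, hkn, rfl⟩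
    · subst hfact
      exact ⟨hcl _ (Or.inl rfl), by norm_num, by norm_num⟩
    · constructor
      · rintro ⟨hmem, heq, h0, hle⟩
        refine ⟨hcl _ (Or.inr ⟨m, k, hk0, hkn, rfl⟩) hmem, ?_, ?_, ?_⟩ <;>
          simp only [] at heq h0 hle ⊢ <;> omega
      · exact hcl _ (Or.inr ⟨m, k, hk0, hkn, rfl⟩)
  have hTH : T ⊆ H := by
    by_contra hns
    exact hmin H ⟨hsub, fun h => hns h⟩ hht
  have := hTH hij
  exact this.2
end
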